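/- For every pair of distinct indices i, j ∈ {1,…,n} the following identity holds: ∑_{k≠i,j} 1/(z_{ik}²·z_{jk}²) = −6/z_{ij}⁴ + (C_{i3} − C_{j3})/z_{ij}³ + (3C_{i3}² + 3C_{j3}² − 4C_{i4} − 4C_{j4})/(12z_{ij}²). -/

import Mathlib

/-!
Since the `n` critical points are distinct, `λ' = c ∏ₖ (X - z_k)` with `c ≠ 0`. Writing
`λ' = c (X - z_m) P_m`, Leibniz' rule gives `λ^{(k+2)}(z_m) = c (k + 1) P_m^{(k)}(z_m)`, so
`C_{m3} = 2 ∑_{k ≠ m} 1/z_{mk}` and `C_{m4} = 3 ((∑_{k ≠ m} 1/z_{mk})² - ∑_{k ≠ m} 1/z_{mk}²)`.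
The identity then comes from summing the partial fraction decomposition of
`1/((x - a)² (x - b)²)` in `x` over the critical points `x = z_k`, `k ≠ i, j`.
-/

open Polynomial Finset

section

variable {R : Type*} [CommRing R]

lemma iterate_derivative_X_sub_C_mul (a : R) (P : R[X]) (k : ℕ) :
    derivative^[k + 1] ((X - C a) * P) =
      (X - C a) * derivative^[k + 1] P + ((k : R[X]) + 1) * derivative^[k] P := by
  induction k with
  | zero =>
    simp only [zero_add, Function.iterate_one, Function.iterate_zero_apply, Nat.cast_zero,
      derivative_mul, derivative_X_sub_C]
    ring
  | succ k ih =>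
    rw [Function.iterate_succ_apply', ih, Function.iterate_succ_apply' _ (k + 1),
      Function.iterate_succ_apply' _ k]
    simp only [derivative_mul, derivative_add, derivative_X_sub_C, derivative_natCast,
      derivative_one, Nat.cast_add, Nat.cast_one]
    ring

lemma eval_iterate_derivative_X_sub_C_mul (a : R) (P : R[X]) (k : ℕ) :
    eval a (derivative^[k + 1] ((X - C a) * P)) = ((k : R) + 1) * eval a (derivative^[k] P) := by
  simp [iterate_derivative_X_sub_C_mul]

end

section

variable {K ι : Type*} [Field K]

lemma eval_derivative_prod_X_sub_C (s : Finset ι) (w : ι → K) {a : K}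
    (ha : ∀ k ∈ s, a ≠ w k) :
    eval a (derivative (∏ k ∈ s, (X - C (w k)))) =
      (∏ k ∈ s, (a - w k)) * ∑ k ∈ s, (a - w k)⁻¹ := by
  classical
  induction s using Finset.induction_on with
  | empty => simp
  | insert b s hb ih =>
    have hb0 : a - w b ≠ 0 := sub_ne_zero.mpr (ha b (mem_insert_self b s))
    simp only [prod_insert hb, sum_insert hb, derivative_mul, derivative_X_sub_C, eval_add,
      eval_mul, eval_sub, eval_X, eval_C, one_mul, eval_prod,
      ih fun k hk => ha k (mem_insert_of_mem hk)]
    field_simp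

lemma eval_iterate_derivative_two_prod_X_sub_C (s : Finset ι) (w : ι → K) {a : K}
    (ha : ∀ k ∈ s, a ≠ w k) :
    eval a (derivative^[2] (∏ k ∈ s, (X - C (w k)))) =
      (∏ k ∈ s, (a - w k)) * ((∑ k ∈ s, (a - w k)⁻¹) ^ 2 - ∑ k ∈ s, ((a - w k) ^ 2)⁻¹) := by
  classical
  induction s using Finset.induction_on with
  | empty => simp
  | insert b s hb ih =>
    have hb0 : a - w b ≠ 0 := sub_ne_zero.mpr (ha b (mem_insert_self b s))
    have hs : ∀ k ∈ s, a ≠ w k := fun k hk => ha k (mem_insert_of_mem hk)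
    rw [prod_insert hb, iterate_derivative_X_sub_C_mul]
    simp only [prod_insert hb, sum_insert hb, eval_add, eval_mul, eval_sub, eval_X, eval_C,
      Nat.cast_one, eval_one, Function.iterate_one, ih hs, eval_derivative_prod_X_sub_C s w hs]
    field_simp
    ring

lemma eq_C_leadingCoeff_mul_prod_X_sub_C [Fintype ι] {f : K[X]}
    (hdeg : f.natDegree = Fintype.card ι) {z : ι → K} (hz : Function.Injective z)
    (hroot : ∀ i, f.eval (z i) = 0) :
    f = C f.leadingCoeff * ∏ k, (X - C (z k)) := by
  rcases eq_or_ne f 0 with rfl | hf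
  · simp
  set g := C f.leadingCoeff * ∏ k, (X - C (z k))
  have hQ : (∏ k, (X - C (z k))).Monic := monic_prod_of_monic _ _ fun k _ => monic_X_sub_C _
  have hc : f.leadingCoeff ≠ 0 := leadingCoeff_ne_zero.mpr hf
  have hg : g ≠ 0 := mul_ne_zero (C_ne_zero.mpr hc) hQ.ne_zero
  have hdegg : g.degree = Fintype.card ι := by
    rw [degree_C_mul hc, degree_eq_natDegree hQ.ne_zero, natDegree_finsetProd_X_sub_C_eq_card,
      card_univ]
  have hlc : f.leadingCoeff = g.leadingCoeff := by
    rw [leadingCoeff_mul, leadingCoeff_C, hQ.leadingCoeff, mul_one]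
  refine eq_of_degree_sub_lt_of_eval_index_eq univ hz.injOn ?_ fun k _ => ?_
  · calc (f - g).degree < g.degree :=
          degree_sub_lt_right (by rw [hdegg, degree_eq_natDegree hf, hdeg]) hg hlc
      _ = #univ := hdegg
  · rw [hroot k, eval_mul, eval_prod, prod_eq_zero (mem_univ k) (by simp), mul_zero]

variable [Fintype ι] [DecidableEq ι] {p : K[X]} {c : K} {z : ι → K}

lemma eval_iterate_derivative_of_derivative_eq_C_mul_prod
    (hp : derivative p = C c * ∏ k, (X - C (z k))) (m : ι) (k : ℕ) :
    eval (z m) (derivative^[k + 2] p) =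
      c * ((k + 1) * eval (z m) (derivative^[k] (∏ l ∈ univ.erase m, (X - C (z l))))) := by
  rw [Function.iterate_succ_apply, hp, ← mul_prod_erase univ _ (mem_univ m),
    iterate_derivative_C_mul, eval_mul, eval_C, eval_iterate_derivative_X_sub_C_mul]

lemma eval_iterate_derivative_three_div_two (hc : c ≠ 0) (hz : Function.Injective z)
    (hp : derivative p = C c * ∏ k, (X - C (z k))) (m : ι) :
    eval (z m) (derivative^[3] p) / eval (z m) (derivative^[2] p) =
      2 * ∑ k ∈ univ.erase m, (z m - z k)⁻¹ := by
  have hne : ∀ k ∈ univ.erase m, z m ≠ z k := fun k hk => hz.ne (ne_of_mem_erase hk).symm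
  rw [eval_iterate_derivative_of_derivative_eq_C_mul_prod hp m 1,
    eval_iterate_derivative_of_derivative_eq_C_mul_prod hp m 0]
  have hP : ∏ k ∈ univ.erase m, (z m - z k) ≠ 0 :=
    prod_ne_zero_iff.mpr fun k hk => sub_ne_zero.mpr (hne k hk)
  simp only [Function.iterate_one, Function.iterate_zero_apply,
    eval_derivative_prod_X_sub_C _ _ hne, eval_prod, eval_sub, eval_X, eval_C]
  field_simp
  ring

lemma eval_iterate_derivative_four_div_two (hc : c ≠ 0) (hz : Function.Injective z)
    (hp : derivative p = C c * ∏ k, (X - C (z k))) (m : ι) :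
    eval (z m) (derivative^[4] p) / eval (z m) (derivative^[2] p) =
      3 * ((∑ k ∈ univ.erase m, (z m - z k)⁻¹) ^ 2 - ∑ k ∈ univ.erase m, ((z m - z k) ^ 2)⁻¹) := by
  have hne : ∀ k ∈ univ.erase m, z m ≠ z k := fun k hk => hz.ne (ne_of_mem_erase hk).symm
  rw [eval_iterate_derivative_of_derivative_eq_C_mul_prod hp m 2,
    eval_iterate_derivative_of_derivative_eq_C_mul_prod hp m 0]
  have hP : ∏ k ∈ univ.erase m, (z m - z k) ≠ 0 :=
    prod_ne_zero_iff.mpr fun k hk => sub_ne_zero.mpr (hne k hk)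
  simp only [Function.iterate_zero_apply,
    eval_iterate_derivative_two_prod_X_sub_C _ _ hne, eval_prod, eval_sub, eval_X, eval_C]
  field_simp
  ring

end

lemma inv_sub_sq_mul_sub_sq_eq {K : Type*} [Field K] {a b x : K} (hab : a ≠ b)
    (ha : a ≠ x) (hb : b ≠ x) :
    ((a - x) ^ 2 * (b - x) ^ 2)⁻¹ =
      ((a - b) ^ 2)⁻¹ * (((a - x) ^ 2)⁻¹ + ((b - x) ^ 2)⁻¹)
        + 2 * ((a - b) ^ 3)⁻¹ * ((a - x)⁻¹ - (b - x)⁻¹) := by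
  have := sub_ne_zero.mpr hab
  have := sub_ne_zero.mpr ha
  have := sub_ne_zero.mpr hb
  field_simp
  ring

lemma sum_erase_eq_add_sum_filter_ne {ι M : Type*} [Fintype ι] [DecidableEq ι]
    [AddCommMonoid M] {i j : ι} (hij : i ≠ j) (f : ι → M) :
    ∑ k ∈ univ.erase i, f k = f j + ∑ k ∈ univ.filter (fun k => k ≠ i ∧ k ≠ j), f k := by
  rw [← add_sum_erase _ f (mem_erase.mpr ⟨hij.symm, mem_univ j⟩)]
  congr 2
  ext k
  simp [and_comm]

theorem stmt_13_general (n : ℕ) (p : Polynomial ℂ)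
    (hdeg : p.natDegree = n + 1)
    (z : Fin n → ℂ) (hz : Function.Injective z)
    (hcrit : ∀ i, (derivative p).eval (z i) = 0)
    (C : Fin n → ℕ → ℂ)
    (hC : ∀ i k, C i k = ((derivative^[k] p).eval (z i)) / ((derivative^[2] p).eval (z i)))
    (i j : Fin n) (hij : i ≠ j) :
    ∑ k ∈ univ.filter (fun k => k ≠ i ∧ k ≠ j),
        1 / ((z i - z k) ^ 2 * (z j - z k) ^ 2)
      = -6 / (z i - z j) ^ 4 + (C i 3 - C j 3) / (z i - z j) ^ 3
        + (3 * (C i 3) ^ 2 + 3 * (C j 3) ^ 2 - 4 * C i 4 - 4 * C j 4)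
            / (12 * (z i - z j) ^ 2) := by
  have hfac := eq_C_leadingCoeff_mul_prod_X_sub_C
    (by rw [natDegree_derivative, hdeg, Fintype.card_fin, Nat.add_sub_cancel]) hz hcrit
  have hc : (derivative p).leadingCoeff ≠ 0 :=
    leadingCoeff_ne_zero.mpr (derivative_ne_zero.mpr (by omega))
  set S := univ.filter (fun k => k ≠ i ∧ k ≠ j)
  have hS : univ.filter (fun k => k ≠ j ∧ k ≠ i) = S := filter_congr fun _ _ => and_comm
  have hSi := sum_erase_eq_add_sum_filter_ne (M := ℂ) hij
  have hSj : ∀ f : Fin n → ℂ, ∑ k ∈ univ.erase j, f k = f i + ∑ k ∈ S, f k := by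
    simpa only [hS] using sum_erase_eq_add_sum_filter_ne hij.symm
  rw [hC, hC, hC, hC, eval_iterate_derivative_three_div_two hc hz hfac,
    eval_iterate_derivative_three_div_two hc hz hfac,
    eval_iterate_derivative_four_div_two hc hz hfac,
    eval_iterate_derivative_four_div_two hc hz hfac, hSi, hSi, hSj, hSj]
  have hpf : ∑ k ∈ S, 1 / ((z i - z k) ^ 2 * (z j - z k) ^ 2) =
      ((z i - z j) ^ 2)⁻¹ * (∑ k ∈ S, ((z i - z k) ^ 2)⁻¹ + ∑ k ∈ S, ((z j - z k) ^ 2)⁻¹)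
        + 2 * ((z i - z j) ^ 3)⁻¹ * (∑ k ∈ S, (z i - z k)⁻¹ - ∑ k ∈ S, (z j - z k)⁻¹) := by
    rw [← sum_add_distrib, ← sum_sub_distrib, mul_sum, mul_sum, ← sum_add_distrib]
    refine sum_congr rfl fun k hk => ?_
    obtain ⟨hki, hkj⟩ := (mem_filter.mp hk).2
    rw [one_div, inv_sub_sq_mul_sub_sq_eq (hz.ne hij) (hz.ne hki.symm) (hz.ne hkj.symm)]
  have hd : z i - z j ≠ 0 := sub_ne_zero.mpr (hz.ne hij)
  rw [hpf, show z j - z i = -(z i - z j) by ring]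
  generalize z i - z j = d at hd ⊢
  field_simp
  ring

/-- For distinct indices `i ≠ j` (residue formula R₅(2,2)),
`∑_{{k≠i,j}} 1/(z_ik²·z_jk²) = −6/z_ij⁴ + (C_i3 − C_j3)/z_ij³
  + (3C_i3² + 3C_j3² − 4C_i4 − 4C_j4)/(12z_ij²)`. -/
theorem stmt_13 (n : ℕ) (hn : 1 ≤ n) (p : Polynomial ℂ)
    (hp : p.Monic) (hdeg : p.natDegree = n + 1)
    (z : Fin n → ℂ) (hz : Function.Injective z)
    (hcrit : ∀ i, (derivative p).eval (z i) = 0)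
    (hnd : ∀ i, (derivative^[2] p).eval (z i) ≠ 0)
    (C : Fin n → ℕ → ℂ)
    (hC : ∀ i k, C i k = ((derivative^[k] p).eval (z i)) / ((derivative^[2] p).eval (z i)))
    (i j : Fin n) (hij : i ≠ j) :
    ∑ k ∈ univ.filter (fun k => k ≠ i ∧ k ≠ j),
        1 / ((z i - z k) ^ 2 * (z j - z k) ^ 2)
      = -6 / (z i - z j) ^ 4 + (C i 3 - C j 3) / (z i - z j) ^ 3
        + (3 * (C i 3) ^ 2 + 3 * (C j 3) ^ 2 - 4 * C i 4 - 4 * C j 4)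
            / (12 * (z i - z j) ^ 2) :=
  stmt_13_general n p hdeg z hz hcrit C hC i j hij
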